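/- Let A be an abelian group, let α, β ∈ A, and let M, N be two (not necessarily distinct) matchings on [2n]. If the multiset of values of s_{α,β} on T(M,l) equals the multiset of values of s_{β,α} on T(N,l) for l = 0 and l = 1, then these multisets are equal for every l ≥ 0. -/

import Mathlib

/-- Number of crossings of a matching given by its set of edges `(a, b)` with `a < b`:
unordered pairs of edges `e, f` with `min e < min f < max e < max f`. -/
def crStat (s : Finset (ℕ × ℕ)) : ℕ :=
  ((s ×ˢ s).filter fun p => p.1.1 < p.2.1 ∧ p.2.1 < p.1.2 ∧ p.1.2 < p.2.2).card

/-- Number of nestings: unordered pairs of edges `e, f` with `min e < min f < max f < max e`. -/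
def neStat (s : Finset (ℕ × ℕ)) : ℕ :=
  ((s ×ˢ s).filter fun p => p.1.1 < p.2.1 ∧ p.2.2 < p.1.2).card

/-- Number of camels (separated pairs): unordered pairs of edges `e, f` with `max e < min f`. -/
def caStat (s : Finset (ℕ × ℕ)) : ℕ :=
  ((s ×ˢ s).filter fun p => p.1.2 < p.2.1).card

/-- `s` is the edge set of a matching on `[2n] = {1, …, 2n}`: `n` edges `(a, b)` with
`a < b`, and every vertex of `[2n]` belongs to exactly one edge. -/
def IsMatching (n : ℕ) (s : Finset (ℕ × ℕ)) : Prop :=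
  s.card = n ∧
  (∀ e ∈ s, e.1 < e.2 ∧ 1 ≤ e.1 ∧ e.2 ≤ 2 * n) ∧
  (∀ v : ℕ, 1 ≤ v → v ≤ 2 * n → ∃! e, e ∈ s ∧ (v = e.1 ∨ v = e.2))

/-- The order isomorphism `[2n] → {2, …, 2n+2} \ {x}`. -/
def shiftV (x v : ℕ) : ℕ := if v + 1 < x then v + 1 else v + 2

/-- The matching on `[2n+2]` obtained from a matching on `[2n]` by relabeling its vertices
order-isomorphically as `{2, …, 2n+2} \ {x}` and adding the new first edge `{1, x}`. -/
def addFirst (x : ℕ) (s : Finset (ℕ × ℕ)) : Finset (ℕ × ℕ) :=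
  insert (1, x) (s.image fun e => (shiftV x e.1, shiftV x e.2))

/-- All matchings obtained from `s` by adding a new first edge in all possible ways. -/
def childrenM (s : Finset (ℕ × ℕ)) : Multiset (Finset (ℕ × ℕ)) :=
  (Finset.Icc 2 (2 * s.card + 2)).val.map fun x => addFirst x s

/-- `levelM s l` is the multiset `T(s, l)` of matchings obtained from `s` by `l` successive
additions of a new first edge in all possible ways. -/
def levelM (s : Finset (ℕ × ℕ)) : ℕ → Multiset (Finset (ℕ × ℕ))
  | 0 => {s}
  | l + 1 => (levelM s l).bind childrenM

/-!
Inserting a new first edge `{1, k + 2}` into a matching `s` on `[2n]` makes it close in gap `k`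
of `s` (between vertices `k` and `k + 1`, `0 ≤ k ≤ 2n`). This adds `φ_k = o_k • α + c_k • β` to
`s_{α,β}`, where `o_k` and `c_k` count the edges of `s` open at, resp. closed before, gap `k`; and
the gap values of the child are `0, φ_0 + α, …, φ_k + α, φ_k + β, …, φ_{2n} + β`.

In the monoid algebra `ℕ[A]` the multiset of values of `s_{α,β}` on `T(s, l)` thus becomes
`x^{s_{α,β}(s)} · D_l(x^{φ_0}, …, x^{φ_{2n}})` for a recursively defined `D_l`. Writing `h_m` for
the complete homogeneous symmetric polynomials, the identity
`∑_j y_j h_a(y_0, …, y_j) h_b(y_j, …, y_m) = h_{a+b+1}(y_0, …, y_m)` shows that `D_l` is a fixed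
linear functional of the sequence `(h_m(y))_m`, with coefficients that are polynomials in the
symmetric expressions `h_m(x^α, x^β)`. So `D_l` depends only on the multiset of gap values and is
invariant under swapping `α` and `β`. Levels `0` and `1` say exactly that `s_{α,β}(M) = s_{β,α}(N)`
and that the gap values of `M` for `(α, β)` are a permutation of those of `N` for `(β, α)`.
-/

open Finset

section CompleteHomogeneous

open PowerSeries

variable {R : Type*} [CommSemiring R]

/-- `∏ 1 / (1 - x t)`: its `n`-th coefficient is `h_n` of the entries. -/
noncomputable def completeGen (L : List R) : R⟦X⟧ := (L.map fun x => mk (x ^ ·)).prod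

theorem completeGen_cons (x : R) (L : List R) :
    completeGen (x :: L) = mk (x ^ ·) * completeGen L := rfl

theorem completeGen_append (L L' : List R) :
    completeGen (L ++ L') = completeGen L * completeGen L' := by
  simp [completeGen]

theorem completeGen_perm {L L' : List R} (h : L.Perm L') : completeGen L = completeGen L' :=
  (h.map _).prod_eq

theorem completeGen_map_mul (c : R) (L : List R) :
    completeGen (L.map (c * ·)) = rescale c (completeGen L) := by
  simp only [completeGen, map_list_prod, List.map_map]
  congr 1
  refine List.map_congr_left fun x _ => ?_
  ext n
  simp [mul_pow]

theorem coeff_zero_completeGen (L : List R) : coeff 0 (completeGen L) = 1 := by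
  rw [coeff_zero_eq_constantCoeff_apply, completeGen, map_list_prod, List.map_map]
  exact List.prod_eq_one (by simp)

theorem coeff_completeGen_cons (x : R) (L : List R) (n : ℕ) :
    coeff n (completeGen (x :: L)) =
      ∑ u ∈ range (n + 1), x ^ u * coeff (n - u) (completeGen L) := by
  rw [completeGen_cons, coeff_mul, Nat.sum_antidiagonal_eq_sum_range_succ
    (fun i j => coeff i (mk (x ^ ·)) * coeff j (completeGen L))]
  simp

theorem coeff_completeGen_one_cons (L : List R) (n : ℕ) :
    coeff n (completeGen (1 :: L)) = ∑ k ∈ range (n + 1), coeff k (completeGen L) := by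
  rw [coeff_completeGen_cons, ← sum_range_reflect]
  refine sum_congr rfl fun k hk => ?_
  rw [mem_range] at hk
  rw [one_pow, one_mul, show n - (n + 1 - 1 - k) = k by omega]

theorem sum_getD_mul_coeff_completeGen_take_drop (L : List R) (a b : ℕ) :
    ∑ j ∈ range L.length, L.getD j 0 * coeff a (completeGen (L.take (j + 1))) *
      coeff b (completeGen (L.drop j)) = coeff (a + b + 1) (completeGen L) := by
  induction L generalizing a with
  | nil => simp [completeGen, coeff_one]
  | cons x T ih =>
    -- split `h_{a+b+1}(x :: T) = ∑ x^u h_{a+b+1-u}(T)` at `u = a + 1`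
    have tail : ∑ i ∈ range T.length, T.getD i 0 * coeff a (completeGen (x :: T.take (i + 1))) *
        coeff b (completeGen (T.drop i)) =
        ∑ u ∈ range (a + 1), x ^ u * coeff (a - u + b + 1) (completeGen T) := by
      simp only [coeff_completeGen_cons, mul_sum, sum_mul, ← ih]
      rw [sum_comm]
      exact sum_congr rfl fun u _ => sum_congr rfl fun i _ => by ring
    have head : x * coeff a (completeGen [x]) * coeff b (completeGen (x :: T)) =
        ∑ u ∈ range (b + 1), x ^ (a + 1 + u) * coeff (b - u) (completeGen T) := by
      have single : coeff a (completeGen [x]) = x ^ a := by simp [completeGen]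
      rw [single, coeff_completeGen_cons, mul_sum]
      exact sum_congr rfl fun u _ => by ring
    rw [List.length_cons, sum_range_succ', coeff_completeGen_cons,
      show a + b + 1 + 1 = (a + 1) + (b + 1) by ring, sum_range_add]
    simp only [List.getD_cons_succ, List.take_succ_cons, List.drop_succ_cons, tail,
      List.getD_cons_zero, List.drop_zero, zero_add, List.take_zero, head]
    congr 1
    · exact sum_congr rfl fun u hu => by rw [mem_range] at hu; congr 3; omega
    · exact sum_congr rfl fun u hu => by congr 3; omega

/-- With `L` the gap monomials of a matching, these are the gap monomials of the child whose new
first edge closes in gap `j` (`gapMonomials_addFirst`). -/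
def childList (g d : R) (L : List R) (j : ℕ) : List R :=
  1 :: ((L.take (j + 1)).map (g * ·) ++ (L.drop j).map (d * ·))

noncomputable def childTransfer (E : R⟦X⟧) : R⟦X⟧ →ₗ[R] R⟦X⟧ where
  toFun F := mk fun n => ∑ k ∈ range (n + 1), coeff k E * coeff (k + 1) F
  map_add' F G := by ext n; simp [mul_add, sum_add_distrib]
  map_smul' c F := by ext n; simp [mul_sum, mul_left_comm]

theorem coeff_childTransfer (E F : R⟦X⟧) (n : ℕ) :
    coeff n (childTransfer E F) = ∑ k ∈ range (n + 1), coeff k E * coeff (k + 1) F := by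
  simp [childTransfer]

theorem coeff_completeGen_pair (g d : R) (k : ℕ) :
    coeff k (completeGen [g, d]) = ∑ p ∈ antidiagonal k, g ^ p.1 * d ^ p.2 := by
  simp [completeGen, coeff_mul]

theorem coeff_completeGen_childList (g d : R) (L : List R) (j n : ℕ) :
    coeff n (completeGen (childList g d L j)) = ∑ k ∈ range (n + 1), ∑ p ∈ antidiagonal k,
      g ^ p.1 * d ^ p.2 * (coeff p.1 (completeGen (L.take (j + 1))) *
        coeff p.2 (completeGen (L.drop j))) := by
  simp only [childList, coeff_completeGen_one_cons, completeGen_append, completeGen_map_mul,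
    coeff_mul, coeff_rescale]
  exact sum_congr rfl fun k _ => sum_congr rfl fun p _ => by ring

theorem sum_smul_completeGen_childList (g d : R) (L : List R) :
    ∑ j ∈ range L.length, L.getD j 0 • completeGen (childList g d L j) =
      childTransfer (completeGen [g, d]) (completeGen L) := by
  ext n
  simp only [map_sum, coeff_smul, smul_eq_mul, coeff_completeGen_childList, coeff_childTransfer,
    coeff_completeGen_pair, mul_sum, sum_mul]
  rw [sum_comm]
  refine sum_congr rfl fun k _ => ?_
  rw [sum_comm]
  refine sum_congr rfl fun p hp => ?_
  rw [← mem_antidiagonal.mp hp, ← sum_getD_mul_coeff_completeGen_take_drop, mul_sum]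
  exact sum_congr rfl fun j _ => by ring

noncomputable def levelFunctional (E : R⟦X⟧) : ℕ → R⟦X⟧ →ₗ[R] R
  | 0 => coeff 0
  | l + 1 => levelFunctional E l ∘ₗ childTransfer E

end CompleteHomogeneous

section Shift

def StartsPos (s : Finset (ℕ × ℕ)) : Prop := ∀ e ∈ s, 1 ≤ e.1

def openAt (s : Finset (ℕ × ℕ)) (k : ℕ) : ℕ := #{e ∈ s | e.1 ≤ k ∧ k < e.2}

def closedBy (s : Finset (ℕ × ℕ)) (k : ℕ) : ℕ := #{e ∈ s | e.2 ≤ k}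

def shiftE (x : ℕ) (e : ℕ × ℕ) : ℕ × ℕ := (shiftV x e.1, shiftV x e.2)

theorem addFirst_eq_insert_image (x : ℕ) (s : Finset (ℕ × ℕ)) :
    addFirst x s = insert (1, x) (s.image (shiftE x)) := rfl

theorem shiftV_lt_shiftV_iff {x u v : ℕ} : shiftV x u < shiftV x v ↔ u < v := by
  unfold shiftV; split_ifs <;> omega

theorem shiftV_injective (x : ℕ) : Function.Injective (shiftV x) := by
  intro u v h
  have := @shiftV_lt_shiftV_iff x u v
  have := @shiftV_lt_shiftV_iff x v u
  omega

theorem shiftE_injective (x : ℕ) : Function.Injective (shiftE x) := fun e f h => by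
  simp only [shiftE, Prod.mk.injEq] at h
  exact Prod.ext (shiftV_injective x h.1) (shiftV_injective x h.2)

theorem shiftV_le_iff_of_gap {x i j : ℕ} (hij : shiftV x i ≤ j) (hji : j < shiftV x (i + 1))
    (v : ℕ) : shiftV x v ≤ j ↔ v ≤ i := by
  unfold shiftV at *; split_ifs at * <;> omega

theorem one_le_shiftV (x v : ℕ) : 1 ≤ shiftV x v := by
  unfold shiftV; split_ifs <;> omega

theorem one_le_of_mem_addFirst {x : ℕ} (hx : 1 ≤ x) {s : Finset (ℕ × ℕ)} {e : ℕ × ℕ}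
    (he : e ∈ addFirst x s) : 1 ≤ e.1 ∧ 1 ≤ e.2 := by
  rw [addFirst_eq_insert_image, mem_insert, mem_image] at he
  rcases he with rfl | ⟨f, -, rfl⟩
  · exact ⟨le_rfl, hx⟩
  · exact ⟨one_le_shiftV x f.1, one_le_shiftV x f.2⟩

theorem startsPos_addFirst {x : ℕ} (hx : 1 ≤ x) (s : Finset (ℕ × ℕ)) :
    StartsPos (addFirst x s) :=
  fun _ he => (one_le_of_mem_addFirst hx he).1

theorem one_mk_notMem_image_shiftE {s : Finset (ℕ × ℕ)} (hs : StartsPos s) (x : ℕ) :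
    (1, x) ∉ s.image (shiftE x) := by
  simp only [mem_image, shiftE, Prod.mk.injEq, not_exists, not_and]
  intro e he h1
  have := hs e he
  unfold shiftV at h1; split_ifs at h1 <;> omega

theorem card_addFirst {s : Finset (ℕ × ℕ)} (hs : StartsPos s) (x : ℕ) :
    #(addFirst x s) = #s + 1 := by
  rw [addFirst_eq_insert_image, card_insert_of_notMem (one_mk_notMem_image_shiftE hs x),
    card_image_of_injective _ (shiftE_injective x)]

theorem card_filter_addFirst {s : Finset (ℕ × ℕ)} (hs : StartsPos s) (x : ℕ)
    (q : ℕ × ℕ → Prop) [DecidablePred q] :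
    #{e ∈ addFirst x s | q e} = #{e ∈ s | q (shiftE x e)} + if q (1, x) then 1 else 0 := by
  have := one_mk_notMem_image_shiftE hs x
  rw [addFirst_eq_insert_image, filter_insert, filter_image]
  split_ifs
  · rw [card_insert_of_notMem fun h => this (image_subset_image (filter_subset _ _) h),
      card_image_of_injective _ (shiftE_injective x)]
  · rw [card_image_of_injective _ (shiftE_injective x), add_zero]

theorem openAt_addFirst_of_gap {s : Finset (ℕ × ℕ)} (hs : StartsPos s) {x i j : ℕ}
    (hij : shiftV x i ≤ j) (hji : j < shiftV x (i + 1)) :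
    openAt (addFirst x s) j = openAt s i + if 1 ≤ j ∧ j < x then 1 else 0 := by
  simp only [openAt, card_filter_addFirst hs, shiftE, ← not_le, shiftV_le_iff_of_gap hij hji]

theorem closedBy_addFirst_of_gap {s : Finset (ℕ × ℕ)} (hs : StartsPos s) {x i j : ℕ}
    (hij : shiftV x i ≤ j) (hji : j < shiftV x (i + 1)) :
    closedBy (addFirst x s) j = closedBy s i + if x ≤ j then 1 else 0 := by
  simp only [closedBy, card_filter_addFirst hs, shiftE, shiftV_le_iff_of_gap hij hji]

theorem openAt_addFirst_zero {x : ℕ} (hx : 1 ≤ x) (s : Finset (ℕ × ℕ)) :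
    openAt (addFirst x s) 0 = 0 := by
  rw [openAt, card_eq_zero, filter_eq_empty_iff]
  intro e he
  have := one_le_of_mem_addFirst hx he
  omega

theorem closedBy_addFirst_zero {x : ℕ} (hx : 1 ≤ x) (s : Finset (ℕ × ℕ)) :
    closedBy (addFirst x s) 0 = 0 := by
  rw [closedBy, card_eq_zero, filter_eq_empty_iff]
  intro e he
  have := one_le_of_mem_addFirst hx he
  omega

theorem card_filter_product_addFirst {s : Finset (ℕ × ℕ)} (hs : StartsPos s) (x : ℕ)
    (P : (ℕ × ℕ) × (ℕ × ℕ) → Prop) [DecidablePred P] (hP : ∀ p, P p → p.1.1 < p.2.1) :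
    #{p ∈ addFirst x s ×ˢ addFirst x s | P p} =
      #{e ∈ s | P ((1, x), shiftE x e)} + #{p ∈ s ×ˢ s | P (shiftE x p.1, shiftE x p.2)} := by
  have hinj : Set.InjOn (shiftE x) s := (shiftE_injective x).injOn
  have hnew_first : ∀ e, ¬ P (shiftE x e, (1, x)) := fun e h => by
    have := one_le_shiftV x e.1
    have := hP _ h
    simp only [shiftE] at this
    omega
  have hnew_new : ¬ P ((1, x), (1, x)) := fun h => lt_irrefl 1 (hP _ h)
  simp only [card_filter, sum_product, addFirst_eq_insert_image,
    sum_insert (one_mk_notMem_image_shiftE hs x), sum_image hinj, hnew_first, hnew_new,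
    if_false, zero_add]

theorem crStat_addFirst {s : Finset (ℕ × ℕ)} (hs : StartsPos s) (k : ℕ) :
    crStat (addFirst (k + 2) s) = openAt s k + crStat s := by
  rw [crStat, card_filter_product_addFirst hs _ _ fun _ h => h.1, crStat, openAt]
  simp only [shiftE, shiftV_lt_shiftV_iff]
  congr 2
  refine filter_congr fun e he => ?_
  have := hs e he
  unfold shiftV; split_ifs <;> omega

theorem neStat_addFirst {s : Finset (ℕ × ℕ)} (hs : StartsPos s) (k : ℕ) :
    neStat (addFirst (k + 2) s) = closedBy s k + neStat s := by
  rw [neStat, card_filter_product_addFirst hs _ _ fun _ h => h.1, neStat, closedBy]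
  simp only [shiftE, shiftV_lt_shiftV_iff]
  congr 2
  refine filter_congr fun e he => ?_
  have := hs e he
  unfold shiftV; split_ifs <;> omega

theorem childrenM_eq_map_range (s : Finset (ℕ × ℕ)) :
    childrenM s = (range (2 * #s + 1)).val.map fun k => addFirst (k + 2) s := by
  have : Icc 2 (2 * #s + 2) = (range (2 * #s + 1)).map (addRightEmbedding 2) := by
    ext x
    simp only [mem_Icc, mem_map, mem_range, addRightEmbedding_apply]
    exact ⟨fun h => ⟨x - 2, by omega, by omega⟩, by rintro ⟨k, hk, rfl⟩; omega⟩
  rw [childrenM, this, map_val, Multiset.map_map]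
  rfl

theorem levelM_succ_eq_bind_childrenM (s : Finset (ℕ × ℕ)) (l : ℕ) :
    levelM s (l + 1) = (childrenM s).bind fun c => levelM c l := by
  induction l generalizing s with
  | zero =>
    simp only [levelM, Multiset.singleton_bind]
    exact ((Multiset.bind_singleton _ id).trans (Multiset.map_id _)).symm
  | succ l ih =>
    rw [levelM, ih, Multiset.bind_assoc]
    rfl

end Shift

section Statistics

variable {A : Type*} [AddCommMonoid A] (γ δ : A)

def crNeStat (K : Finset (ℕ × ℕ)) : A := crStat K • γ + neStat K • δ

def gapValue (s : Finset (ℕ × ℕ)) (k : ℕ) : A := openAt s k • γ + closedBy s k • δ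

def gapValues (s : Finset (ℕ × ℕ)) : List A := (List.range (2 * #s + 1)).map (gapValue γ δ s)

variable {γ δ} {s : Finset (ℕ × ℕ)}

theorem crNeStat_addFirst (hs : StartsPos s) (k : ℕ) :
    crNeStat γ δ (addFirst (k + 2) s) = crNeStat γ δ s + gapValue γ δ s k := by
  simp only [crNeStat, gapValue, crStat_addFirst hs, neStat_addFirst hs, add_nsmul]
  abel

theorem gapValue_addFirst_zero (k : ℕ) : gapValue γ δ (addFirst (k + 2) s) 0 = 0 := by
  simp [gapValue, openAt_addFirst_zero, closedBy_addFirst_zero]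

theorem gapValue_addFirst_of_le (hs : StartsPos s) {k i : ℕ} (hi : i ≤ k) :
    gapValue γ δ (addFirst (k + 2) s) (i + 1) = γ + gapValue γ δ s i := by
  have hij : shiftV (k + 2) i ≤ i + 1 := by unfold shiftV; split_ifs <;> omega
  have hji : i + 1 < shiftV (k + 2) (i + 1) := by unfold shiftV; split_ifs <;> omega
  simp only [gapValue, openAt_addFirst_of_gap hs hij hji, closedBy_addFirst_of_gap hs hij hji]
  rw [if_pos (by omega), if_neg (by omega), Nat.add_zero, add_nsmul, one_nsmul]
  abel

theorem gapValue_addFirst_of_ge (hs : StartsPos s) {k i : ℕ} (hi : k ≤ i) :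
    gapValue γ δ (addFirst (k + 2) s) (i + 2) = δ + gapValue γ δ s i := by
  have hij : shiftV (k + 2) i ≤ i + 2 := by unfold shiftV; split_ifs <;> omega
  have hji : i + 2 < shiftV (k + 2) (i + 1) := by unfold shiftV; split_ifs <;> omega
  simp only [gapValue, openAt_addFirst_of_gap hs hij hji, closedBy_addFirst_of_gap hs hij hji]
  rw [if_neg (by omega), if_pos (by omega), Nat.add_zero, add_nsmul, one_nsmul]
  abel

theorem gapValues_addFirst (hs : StartsPos s) {k : ℕ} (hk : k ≤ 2 * #s) :
    gapValues γ δ (addFirst (k + 2) s) =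
      0 :: (((gapValues γ δ s).take (k + 1)).map (γ + ·) ++
        ((gapValues γ δ s).drop k).map (δ + ·)) := by
  refine List.ext_getElem (by simp [gapValues, card_addFirst hs]; omega) fun j h₁ h₂ => ?_
  simp only [gapValues, List.getElem_map, List.getElem_range] at h₁ ⊢
  rcases j with _ | j
  · simp [gapValue_addFirst_zero]
  · simp only [List.getElem_cons_succ]
    by_cases hj : j ≤ k
    · rw [List.getElem_append_left (by simp; omega)]
      simp [gapValue_addFirst_of_le hs hj]
    · rw [List.getElem_append_right (by simp; omega)]
      obtain ⟨i, rfl⟩ : ∃ i, j = i + 1 := ⟨j - 1, by omega⟩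
      simp [min_eq_left hk, Nat.add_sub_cancel' (by omega : k ≤ i),
        gapValue_addFirst_of_ge hs (by omega : k ≤ i)]


theorem map_crNeStat_levelM_one (hs : StartsPos s) :
    (levelM s 1).map (crNeStat γ δ) = (gapValues γ δ s : Multiset A).map (crNeStat γ δ s + ·) := by
  rw [show levelM s 1 = childrenM s from Multiset.singleton_bind _ _, childrenM_eq_map_range,
    gapValues, ← Multiset.map_coe, Multiset.map_map, Multiset.map_map]
  exact Multiset.map_congr rfl fun k _ => crNeStat_addFirst hs k

end Statistics

namespace AddMonoidAlgebra

theorem of'_add {k G : Type*} [Semiring k] [AddMonoid G] (a b : G) :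
    of' k G (a + b) = of' k G a * of' k G b := by
  simp [of'_apply, single_mul_single]

theorem toMultiset_coeff_sum_map_of' {G : Type*} (m : Multiset G) :
    Finsupp.toMultiset ((m.map (of' ℕ G)).sum.coeff) = m := by
  induction m using Multiset.induction_on with
  | empty => simp
  | cons a m ih => simp [coeff_add, ih, of'_apply, coeff_single]

theorem sum_map_of'_injective {G : Type*} :
    Function.Injective fun m : Multiset G => (m.map (of' ℕ G)).sum :=
  Function.LeftInverse.injective (g := fun x : AddMonoidAlgebra ℕ G => Finsupp.toMultiset x.coeff)
    toMultiset_coeff_sum_map_of'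

end AddMonoidAlgebra

section GeneratingFunction

open AddMonoidAlgebra PowerSeries

variable {A : Type*} [AddCommMonoid A] (γ δ : A)

noncomputable def gapMonomials (s : Finset (ℕ × ℕ)) : List (AddMonoidAlgebra ℕ A) :=
  (gapValues γ δ s).map (of' ℕ A)

variable {γ δ} {s : Finset (ℕ × ℕ)}

theorem gapMonomials_addFirst (hs : StartsPos s) {k : ℕ} (hk : k ≤ 2 * #s) :
    gapMonomials γ δ (addFirst (k + 2) s) =
      childList (of' ℕ A γ) (of' ℕ A δ) (gapMonomials γ δ s) k := by
  simp only [gapMonomials, gapValues_addFirst hs hk, childList, List.map_cons, List.map_append,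
    List.map_take, List.map_drop, List.map_map, Function.comp_def, of'_add]
  rfl

theorem sum_smul_completeGen_gapMonomials_addFirst (hs : StartsPos s) :
    ∑ k ∈ range (2 * #s + 1),
        of' ℕ A (gapValue γ δ s k) • completeGen (gapMonomials γ δ (addFirst (k + 2) s)) =
      childTransfer (completeGen [of' ℕ A γ, of' ℕ A δ]) (completeGen (gapMonomials γ δ s)) := by
  have hlen : (gapMonomials γ δ s).length = 2 * #s + 1 := by simp [gapMonomials, gapValues]
  rw [← sum_smul_completeGen_childList, hlen]
  refine sum_congr rfl fun k hk => ?_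
  rw [mem_range] at hk
  rw [gapMonomials_addFirst hs (by omega)]
  simp [gapMonomials, gapValues, hk]

theorem sum_of'_crNeStat_levelM (l : ℕ) (hs : StartsPos s) :
    (((levelM s l).map (crNeStat γ δ)).map (of' ℕ A)).sum =
      of' ℕ A (crNeStat γ δ s) * levelFunctional (completeGen [of' ℕ A γ, of' ℕ A δ]) l
        (completeGen (gapMonomials γ δ s)) := by
  induction l generalizing s with
  | zero => simp [levelM, levelFunctional, coeff_zero_completeGen]
  | succ l ih =>
    rw [levelM_succ_eq_bind_childrenM, Multiset.map_bind, Multiset.map_bind, Multiset.sum_bind,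
      childrenM_eq_map_range, Multiset.map_map]
    change ∑ k ∈ range (2 * #s + 1), _ = _
    rw [levelFunctional, LinearMap.comp_apply, ← sum_smul_completeGen_gapMonomials_addFirst hs,
      map_sum, mul_sum]
    refine sum_congr rfl fun k _ => ?_
    rw [Function.comp_apply, ih (startsPos_addFirst (by omega) s), crNeStat_addFirst hs, of'_add,
      map_smul, smul_eq_mul, mul_assoc]

end GeneratingFunction

/-- if the multiset of values of `s_{α,β}` on `T(M,l)` equals the multiset of
values of `s_{β,α}` on `T(N,l)` for `l = 0, 1`, then they are equal for every `l ≥ 0`. -/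
theorem sab_sba_coincide_of_first_two_levels
    {A : Type*} [AddCommGroup A] (α β : A) (n : ℕ)
    (M N : Finset (ℕ × ℕ)) (hM : IsMatching n M) (hN : IsMatching n N)
    (h0 : (levelM M 0).map (fun K => crStat K • α + neStat K • β)
        = (levelM N 0).map (fun K => crStat K • β + neStat K • α))
    (h1 : (levelM M 1).map (fun K => crStat K • α + neStat K • β)
        = (levelM N 1).map (fun K => crStat K • β + neStat K • α)) :
    ∀ l : ℕ, (levelM M l).map (fun K => crStat K • α + neStat K • β)
        = (levelM N l).map (fun K => crStat K • β + neStat K • α) := by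
  have hMpos : StartsPos M := fun e he => (hM.2.1 e he).2.1
  have hNpos : StartsPos N := fun e he => (hN.2.1 e he).2.1
  have hroot : crNeStat α β M = crNeStat β α N := Multiset.singleton_inj.mp h0
  have hgaps : (gapValues α β M : Multiset A) = gapValues β α N := by
    have h : (levelM M 1).map (crNeStat α β) = (levelM N 1).map (crNeStat β α) := h1
    rw [map_crNeStat_levelM_one hMpos, map_crNeStat_levelM_one hNpos, hroot] at h
    exact Multiset.map_injective (add_right_injective _) h
  intro l
  apply AddMonoidAlgebra.sum_map_of'_injective
  change (((levelM M l).map (crNeStat α β)).map _).sum =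
    (((levelM N l).map (crNeStat β α)).map _).sum
  rw [sum_of'_crNeStat_levelM l hMpos, sum_of'_crNeStat_levelM l hNpos, hroot,
    completeGen_perm (.swap _ _ []), gapMonomials, gapMonomials,
    completeGen_perm ((Multiset.coe_eq_coe.mp hgaps).map _)]
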